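/- arXiv:0806.2588 — 6 statements merged into one kernel-verified Lean document; each statement's English description precedes it below -/
import Mathlib

section
/- Let k be a field, S = k[[t]], e ≥ 1, and U = (u_{ij}), V = (v_{ij}) ∈ M_n(S) with U·V = t^e·I. Suppose there is an index i₀ with 0 ≤ i₀ ≤ n such that: (1) for every column index j ≤ i₀, all entries u_{ij} lie in tS; and (2) the reductions modulo t of the columns of U with index j > i₀ are k-linearly independent vectors in k^n. Then for all indices i, j, r one has u_{ij}·v_{jr} ∈ tS. -/
/-!
Reducing modulo `t` turns `U * V = tᵉ • 1` into `Ū * V̄ = 0`. The columns of `Ū` with index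
below `i₀` vanish, so column `r` of this identity is a linear relation among the independent
remaining columns of `Ū` with coefficients `v̄_{jr}`; hence `v̄_{jr} = 0` for `j ≥ i₀`, while
`ū_{ij} = 0` for `j < i₀`. Either way `u_{ij} v_{jr}` has zero constant term.
-/

theorem Matrix.apply_eq_zero_of_mul_eq_zero_of_linearIndependent {R m n o : Type*} [CommRing R]
    [Fintype n] {A : Matrix m n R} {B : Matrix n o R} (hAB : A * B = 0) {p : n → Prop}
    (hzero : ∀ i j, ¬ p j → A i j = 0)
    (hli : LinearIndependent R fun j : {j // p j} => fun i => A i j.1)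
    {j : n} (hj : p j) (r : o) : B j r = 0 := by
  classical
  have hcomb : ∑ j : {j // p j}, B j r • (fun i => A i j) = 0 := by
    have hsplit := Fintype.sum_subtype_add_sum_subtype p (fun j => B j r • fun i => A i j)
    have hrest : ∑ j : {j // ¬ p j}, B j r • (fun i => A i j) = 0 :=
      Finset.sum_eq_zero fun j _ => by
        rw [show (fun i => A i j) = 0 from funext fun i => hzero i j j.2, smul_zero]
    rw [hrest, add_zero] at hsplit
    rw [hsplit]
    ext i
    simpa [Matrix.mul_apply, mul_comm] using congrFun (congrFun hAB i) r
  exact Fintype.linearIndependent_iff.mp hli (fun j => B j r) hcomb ⟨j, hj⟩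

theorem special_basis_entry_product_div_general {k : Type*} [Field k] (n e : ℕ) (he : 1 ≤ e)
    (U V : Matrix (Fin n) (Fin n) (PowerSeries k))
    (hUV : U * V =
      (PowerSeries.X : PowerSeries k) ^ e • (1 : Matrix (Fin n) (Fin n) (PowerSeries k)))
    (i₀ : ℕ)
    (hsmall : ∀ i j : Fin n, (j : ℕ) < i₀ → (PowerSeries.X : PowerSeries k) ∣ U i j)
    (hindep : LinearIndependent k
      (fun j : {j : Fin n // i₀ ≤ (j : ℕ)} =>
        fun i : Fin n => PowerSeries.constantCoeff (U i j.1))) :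
    ∀ i j r : Fin n, (PowerSeries.X : PowerSeries k) ∣ U i j * V j r := by
  set c := PowerSeries.constantCoeff (R := k)
  have hsmall₀ : ∀ i j : Fin n, ¬ i₀ ≤ (j : ℕ) → c (U i j) = 0 := fun i j hj =>
    PowerSeries.X_dvd_iff.mp (hsmall i j (not_le.mp hj))
  have hred : U.map c * V.map c = 0 := by
    rw [← Matrix.map_mul, hUV]
    ext a b
    simp [c, zero_pow (Nat.one_le_iff_ne_zero.mp he)]
  intro i j r
  rw [PowerSeries.X_dvd_iff, map_mul]
  by_cases hj : i₀ ≤ (j : ℕ)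
  · have hV : c (V j r) = 0 :=
      Matrix.apply_eq_zero_of_mul_eq_zero_of_linearIndependent hred hsmall₀ hindep hj r
    exact mul_eq_zero_of_right _ hV
  · exact mul_eq_zero_of_left (hsmall₀ i j hj) _

/-- **Proposition 1.4.1.** Let `S = k[[t]]`, `U·V = tᵉ·I` with `e ≥ 1`. Suppose there
is `i₀ ≤ n` such that the entries of the first `i₀` columns of `U` lie in `tS`, and the
reductions mod `t` of the remaining columns are `k`-linearly independent. Then
`u_{ij}·v_{jr} ∈ tS` for all indices `i, j, r`. -/
theorem special_basis_entry_product_div {k : Type*} [Field k] (n e : ℕ) (he : 1 ≤ e)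
    (U V : Matrix (Fin n) (Fin n) (PowerSeries k))
    (hUV : U * V =
      (PowerSeries.X : PowerSeries k) ^ e • (1 : Matrix (Fin n) (Fin n) (PowerSeries k)))
    (i₀ : ℕ) (hi₀ : i₀ ≤ n)
    (hsmall : ∀ i j : Fin n, (j : ℕ) < i₀ → (PowerSeries.X : PowerSeries k) ∣ U i j)
    (hindep : LinearIndependent k
      (fun j : {j : Fin n // i₀ ≤ (j : ℕ)} =>
        fun i : Fin n => PowerSeries.constantCoeff (U i j.1))) :
    ∀ i j r : Fin n, (PowerSeries.X : PowerSeries k) ∣ U i j * V j r :=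
  special_basis_entry_product_div_general n e he U V hUV i₀ hsmall hindep
end

section
/- Let p ≥ 2 be an integer, e > 0 a real number, and set e* = e·p/(p−1). For each natural number n define g_n : ℝ → ℝ by g_n(x) = x if x ≤ e*·p^n, and g_n(x) = e*·p^n + (x − e*·p^n)/p if x ≥ e*·p^n. Then for every n ≥ 1, the composite (g_0 ∘ g_1 ∘ ⋯ ∘ g_{n−1}) evaluated at e*·p^{n−1} equals e* + e·(n−1). -/
/-! Above its break point `t * q ^ k` the Herbrand function `g k` has slope `1 / q`, and the
break points grow by the factor `q`, so every point `t * q ^ k + c` with `c ≥ 0` stays above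
the break points all the way down the composite: each of the `k` steps contributes
`t * (1 - q⁻¹)` (which is `e` for `t = e*`, `q = p`) and divides the excess `c` by `q`. -/

/-- `iterComp g n = g 0 ∘ g 1 ∘ ⋯ ∘ g (n-1)` (with `g (n-1)` applied first). -/
def iterComp (g : ℕ → ℝ → ℝ) : ℕ → ℝ → ℝ
  | 0 => id
  | n + 1 => iterComp g n ∘ g n

theorem iterComp_succ_apply (g : ℕ → ℝ → ℝ) (n : ℕ) (x : ℝ) :
    iterComp g (n + 1) x = iterComp g n (g n x) :=
  rfl

section HerbrandTower

variable {q t : ℝ} {g : ℕ → ℝ → ℝ}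

theorem herbrand_apply_of_le
    (hg : ∀ n x, g n x = if x ≤ t * q ^ n then x else t * q ^ n + (x - t * q ^ n) / q)
    {n : ℕ} {x : ℝ} (hx : x ≤ t * q ^ n) : g n x = x := by
  rw [hg, if_pos hx]

theorem herbrand_apply_of_ge
    (hg : ∀ n x, g n x = if x ≤ t * q ^ n then x else t * q ^ n + (x - t * q ^ n) / q)
    {n : ℕ} {x : ℝ} (hx : t * q ^ n ≤ x) : g n x = t * q ^ n + (x - t * q ^ n) / q := by
  rw [hg]
  split_ifs with h
  · rw [le_antisymm h hx, sub_self, zero_div, add_zero]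
  · rfl

theorem iterComp_herbrand_above (hq : 1 < q) (ht : 0 ≤ t)
    (hg : ∀ n x, g n x = if x ≤ t * q ^ n then x else t * q ^ n + (x - t * q ^ n) / q)
    (k : ℕ) {c : ℝ} (hc : 0 ≤ c) :
    iterComp g k (t * q ^ k + c) = t + t * (1 - q⁻¹) * k + c / q ^ k := by
  have hq0 : 0 < q := zero_lt_one.trans hq
  induction k generalizing c with
  | zero => simp [iterComp]
  | succ k ih =>
    have hbreak : t * q ^ k ≤ t * q ^ (k + 1) + c := by
      have : t * q ^ k ≤ t * q ^ (k + 1) :=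
        mul_le_mul_of_nonneg_left (pow_le_pow_right₀ hq.le k.le_succ) ht
      linarith
    have hexcess : 0 ≤ (t * q ^ (k + 1) + c - t * q ^ k) / q :=
      div_nonneg (sub_nonneg.mpr hbreak) hq0.le
    rw [iterComp_succ_apply, herbrand_apply_of_ge hg hbreak, ih hexcess]
    push_cast
    field_simp
    ring

theorem iterComp_herbrand_at_break (hq : 1 < q) (ht : 0 ≤ t)
    (hg : ∀ n x, g n x = if x ≤ t * q ^ n then x else t * q ^ n + (x - t * q ^ n) / q)
    (m : ℕ) : iterComp g (m + 1) (t * q ^ m) = t + t * (1 - q⁻¹) * m := by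
  have h := iterComp_herbrand_above hq ht hg m le_rfl
  rw [add_zero, zero_div, add_zero] at h
  rw [iterComp_succ_apply, herbrand_apply_of_le hg le_rfl, h]

end HerbrandTower

/-- For the Herbrand functions `g_n` of the Kummer tower, the composite
`g_0 ∘ ⋯ ∘ g_{n-1}` evaluated at `e*·p^{n-1}` equals `e* + e·(n-1)`. -/
theorem herbrand_composite_value (p : ℕ) (hp : 2 ≤ p) (e : ℝ) (he : 0 < e)
    (estar : ℝ) (hestar : estar = e * p / ((p : ℝ) - 1))
    (g : ℕ → ℝ → ℝ)
    (hg : ∀ (n : ℕ) (x : ℝ),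
      g n x = if x ≤ estar * (p : ℝ) ^ n then x
        else estar * (p : ℝ) ^ n + (x - estar * (p : ℝ) ^ n) / p) :
    ∀ n : ℕ, 1 ≤ n →
      iterComp g n (estar * (p : ℝ) ^ (n - 1)) = estar + e * ((n : ℝ) - 1) := by
  intro n hn
  have hp1 : (1 : ℝ) < p := by exact_mod_cast hp
  have hestar_nonneg : 0 ≤ estar := by
    rw [hestar]
    exact div_nonneg (by positivity) (sub_nonneg.mpr hp1.le)
  have hslope : estar * (1 - (p : ℝ)⁻¹) = e := by
    rw [hestar]
    field_simp [(sub_pos.mpr hp1).ne']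
  obtain ⟨m, rfl⟩ := Nat.exists_eq_add_of_le' hn
  rw [Nat.add_sub_cancel, iterComp_herbrand_at_break hp1 hestar_nonneg hg m, hslope]
  push_cast
  ring
end

section
/- Let B be a commutative ring and A a commutative B-algebra. Suppose θ, θ₁ ∈ A and F, F₁ ∈ B[X] are monic polynomials such that the B-algebra maps B[X]/(F) → A and B[X]/(F₁) → A sending X to θ and to θ₁ respectively are isomorphisms. Then the ideals of A generated by F′(θ) and by F₁′(θ₁) coincide: (F′(θ)) = (F₁′(θ₁)). -/
/-!
Write `θ₁ = G(θ)` and `θ = H(θ₁)`. Since the kernel of `P ↦ P(θ)` is `(F)`, both `F₁ ∘ G` and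
`H ∘ G - X` are multiples of `F`, and the derivative of any multiple of `F` vanishes at `θ`
modulo `F′(θ)`. Differentiating gives `F₁′(θ₁) G′(θ) ≡ 0` and `H′(θ₁) G′(θ) ≡ 1` modulo `F′(θ)`,
so `G′(θ)` is invertible there and `F₁′(θ₁) ∈ (F′(θ))`; the reverse inclusion is symmetric.
-/

open Polynomial

section

variable {B A : Type*} [CommRing B] [CommRing A] [Algebra B A]

theorem aeval_eq_zero_of_ker_eq_span {θ : A} {F : B[X]}
    (hker : RingHom.ker (aeval θ : B[X] →ₐ[B] A) = Ideal.span {F}) : aeval θ F = 0 :=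
  RingHom.mem_ker.mp (hker ▸ Ideal.mem_span_singleton_self F)

theorem aeval_derivative_mem_span_of_dvd {θ : A} {F P : B[X]} (hF : aeval θ F = 0)
    (hP : F ∣ P) : aeval θ (derivative P) ∈ Ideal.span {aeval θ (derivative F)} := by
  obtain ⟨Q, rfl⟩ := hP
  rw [Ideal.mem_span_singleton]
  exact ⟨aeval θ Q, by simp [derivative_mul, hF]⟩

theorem aeval_derivative_mem_span_of_ker_eq {θ θ₁ : A} {F F₁ : B[X]}
    (hsurj : Function.Surjective (aeval θ : B[X] →ₐ[B] A))
    (hker : RingHom.ker (aeval θ : B[X] →ₐ[B] A) = Ideal.span {F})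
    (hsurj₁ : Function.Surjective (aeval θ₁ : B[X] →ₐ[B] A)) (hF₁ : aeval θ₁ F₁ = 0) :
    aeval θ₁ (derivative F₁) ∈ Ideal.span {aeval θ (derivative F)} := by
  obtain ⟨G, hG⟩ := hsurj θ₁
  obtain ⟨H, hH⟩ := hsurj₁ θ
  have dvd_of_aeval_eq_zero : ∀ P : B[X], aeval θ P = 0 → F ∣ P := fun P hP ↦
    Ideal.mem_span_singleton.mp (hker ▸ RingHom.mem_ker.mpr hP)
  have hF := aeval_eq_zero_of_ker_eq_span hker
  have hF₁G : aeval θ (derivative G) * aeval θ₁ (derivative F₁) ∈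
      Ideal.span {aeval θ (derivative F)} := by
    have := aeval_derivative_mem_span_of_dvd hF <|
      dvd_of_aeval_eq_zero (F₁.comp G) (by rw [aeval_comp, hG, hF₁])
    rwa [derivative_comp, map_mul, aeval_comp, hG] at this
  have hHG : aeval θ (derivative G) * aeval θ₁ (derivative H) - 1 ∈
      Ideal.span {aeval θ (derivative F)} := by
    have := aeval_derivative_mem_span_of_dvd hF <|
      dvd_of_aeval_eq_zero (H.comp G - X) (by rw [map_sub, aeval_comp, hG, hH, aeval_X, sub_self])
    rwa [derivative_sub, derivative_comp, derivative_X, map_sub, map_mul, aeval_comp, hG,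
      map_one] at this
  have key : aeval θ₁ (derivative F₁) =
      aeval θ₁ (derivative H) * (aeval θ (derivative G) * aeval θ₁ (derivative F₁)) -
        aeval θ₁ (derivative F₁) * (aeval θ (derivative G) * aeval θ₁ (derivative H) - 1) := by
    ring
  rw [key]
  exact sub_mem (Ideal.mul_mem_left _ _ hF₁G) (Ideal.mul_mem_left _ _ hHG)

end

theorem different_well_defined_general {B A : Type*} [CommRing B] [CommRing A] [Algebra B A]
    (θ θ₁ : A) (F F₁ : Polynomial B)
    (hsurj : Function.Surjective (Polynomial.aeval θ : Polynomial B →ₐ[B] A))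
    (hker : RingHom.ker (Polynomial.aeval θ : Polynomial B →ₐ[B] A) =
      Ideal.span ({F} : Set (Polynomial B)))
    (hsurj₁ : Function.Surjective (Polynomial.aeval θ₁ : Polynomial B →ₐ[B] A))
    (hker₁ : RingHom.ker (Polynomial.aeval θ₁ : Polynomial B →ₐ[B] A) =
      Ideal.span ({F₁} : Set (Polynomial B))) :
    Ideal.span ({Polynomial.aeval θ (Polynomial.derivative F)} : Set A) =
      Ideal.span ({Polynomial.aeval θ₁ (Polynomial.derivative F₁)} : Set A) := by
  apply le_antisymm <;> rw [Ideal.span_le, Set.singleton_subset_iff]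
  · exact aeval_derivative_mem_span_of_ker_eq hsurj₁ hker₁ hsurj
      (aeval_eq_zero_of_ker_eq_span hker)
  · exact aeval_derivative_mem_span_of_ker_eq hsurj hker hsurj₁
      (aeval_eq_zero_of_ker_eq_span hker₁)

/-- **Proposition 5.1.1(b).** If `A = B[θ] = B[X]/(F) = B[θ₁] = B[X]/(F₁)` (with `F, F₁`
monic), then the ideals `(F′(θ))` and `(F₁′(θ₁))` of `A` coincide: the different of a
monogenic algebra is well defined. -/
theorem different_well_defined {B A : Type*} [CommRing B] [CommRing A] [Algebra B A]
    (θ θ₁ : A) (F F₁ : Polynomial B) (hF : F.Monic) (hF₁ : F₁.Monic)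
    (hsurj : Function.Surjective (Polynomial.aeval θ : Polynomial B →ₐ[B] A))
    (hker : RingHom.ker (Polynomial.aeval θ : Polynomial B →ₐ[B] A) =
      Ideal.span ({F} : Set (Polynomial B)))
    (hsurj₁ : Function.Surjective (Polynomial.aeval θ₁ : Polynomial B →ₐ[B] A))
    (hker₁ : RingHom.ker (Polynomial.aeval θ₁ : Polynomial B →ₐ[B] A) =
      Ideal.span ({F₁} : Set (Polynomial B))) :
    Ideal.span ({Polynomial.aeval θ (Polynomial.derivative F)} : Set A) =
      Ideal.span ({Polynomial.aeval θ₁ (Polynomial.derivative F₁)} : Set A) :=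
  different_well_defined_general θ θ₁ F F₁ hsurj hker hsurj₁ hker₁
end

section
/- Let p be a prime, l(X) = ∑_{n≥0} X^{p^n}/p^n ∈ ℚ[[X]], and let l^{−1} be its compositional inverse (the unique power series with zero constant term satisfying l(l^{−1}(X)) = X). Define [p](X) = l^{−1}(p·l(X)) ∈ ℚ[[X]]. Then the coefficient of X in [p](X) equals p, and the coefficient of X^p in [p](X) equals 1 − p^{p−1}. -/
/-! Since `l = X + X^p/p + O(X^{p+1})`, comparing the coefficients of `X` and `X^p` in
`l(l⁻¹(X)) = X` shows that `l⁻¹` has coefficients `1` and `-1/p` there. As `p·l(X) = pX + O(X^p)`,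
the powers `(p·l)^k` with `1 < k < p` vanish in degree `p`, so only the linear and the degree-`p`
terms of `l⁻¹` contribute to the coefficient of `X^p` in `l⁻¹(p·l(X))`, which is therefore
`1 · p·p⁻¹ + (-p⁻¹) · p^p`. -/

open PowerSeries

-- The Lubin–Tate logarithm `l(X) = ∑_{n ≥ 0} X^{p^n} / p^n ∈ ℚ[[X]]`.
open Classical in
noncomputable def lubinTateLog (p : ℕ) : PowerSeries ℚ :=
  PowerSeries.mk fun n => if ∃ m : ℕ, n = p ^ m then ((p : ℚ) ^ Nat.log p n)⁻¹ else 0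

/-- Composition (substitution) `f(g)` of formal power series, intended for `g` with zero
constant term: the coefficient of `X^n` in `f(g)` is `∑_{k ≤ n} f_k · (g^k)_n`. -/
noncomputable def psComp (f g : PowerSeries ℚ) : PowerSeries ℚ :=
  PowerSeries.mk fun n =>
    ∑ k ∈ Finset.range (n + 1), PowerSeries.coeff k f * PowerSeries.coeff n (g ^ k)

lemma pow_pred_mul_sub_dvd_pow_sub_pow {R : Type*} [CommRing R] {x a b : R}
    (ha : x ∣ a) (hb : x ∣ b) (k : ℕ) : x ^ (k - 1) * (a - b) ∣ a ^ k - b ^ k := by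
  obtain ⟨a, rfl⟩ := ha
  obtain ⟨b, rfl⟩ := hb
  rcases Nat.eq_zero_or_pos k with rfl | hk
  · simp
  · rw [← mul_sub, ← mul_assoc, pow_sub_one_mul hk.ne', mul_pow, mul_pow, ← mul_sub]
    exact mul_dvd_mul_left _ (sub_dvd_pow_sub_pow a b k)

namespace PowerSeries

variable {R : Type*} [CommRing R]

lemma X_sq_dvd_sub_C_coeff_one_mul_X {g : R⟦X⟧} (hg : constantCoeff g = 0) :
    X ^ 2 ∣ g - C (coeff 1 g) * X := by
  rw [X_pow_dvd_iff]
  intro m hm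
  interval_cases m <;> simp [hg]

/-- If `g = c X + O(X^d)` then `g^k = c^k X^k + O(X^(k+d-1))`. -/
lemma coeff_pow_of_X_pow_dvd_sub_C_mul_X {g : R⟦X⟧} {c : R} {d : ℕ} (hd : 1 ≤ d)
    (hg : X ^ d ∣ g - C c * X) {k n : ℕ} (hn : n + 1 < k + d) :
    coeff n (g ^ k) = if n = k then c ^ k else 0 := by
  have hX : X ∣ g := by
    simpa using (dvd_pow_self X (by omega : d ≠ 0)).trans hg |>.add (dvd_mul_left X (C c))
  have hdvd : X ^ (k + d - 1) ∣ g ^ k - (C c * X) ^ k :=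
    calc X ^ (k + d - 1) ∣ X ^ (k - 1) * X ^ d := by
          rw [← pow_add]; exact pow_dvd_pow X (by omega)
      _ ∣ X ^ (k - 1) * (g - C c * X) := mul_dvd_mul_left _ hg
      _ ∣ g ^ k - (C c * X) ^ k :=
        pow_pred_mul_sub_dvd_pow_sub_pow hX (dvd_mul_left X (C c)) k
  rw [← sub_add_cancel (g ^ k) ((C c * X) ^ k), map_add, X_pow_dvd_iff.mp hdvd n (by omega),
    zero_add, mul_pow, ← map_pow, coeff_C_mul_X_pow]

end PowerSeries

lemma coeff_one_psComp (f g : ℚ⟦X⟧) : coeff 1 (psComp f g) = coeff 1 f * coeff 1 g := by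
  simp [psComp, Finset.sum_range_succ]

lemma coeff_psComp_of_middle_eq_zero {f g : ℚ⟦X⟧} {n : ℕ} (hn : 2 ≤ n)
    (h : ∀ k, 2 ≤ k → k < n → coeff k f * coeff n (g ^ k) = 0) :
    coeff n (psComp f g) = coeff 1 f * coeff n g + coeff n f * coeff n (g ^ n) := by
  obtain ⟨m, rfl⟩ : ∃ m, n = m + 2 := ⟨n - 2, by omega⟩
  have hmid : ∑ k ∈ Finset.range m, coeff (k + 1 + 1) f * coeff (m + 2) (g ^ (k + 1 + 1)) = 0 :=
    Finset.sum_eq_zero fun k hk => h (k + 2) (by omega) (by simpa using hk)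
  rw [psComp, coeff_mk, Finset.sum_range_succ, Finset.sum_range_succ', Finset.sum_range_succ',
    hmid]
  simp

open Classical in
lemma coeff_lubinTateLog (p n : ℕ) :
    coeff n (lubinTateLog p) = if ∃ m, n = p ^ m then ((p : ℚ) ^ Nat.log p n)⁻¹ else 0 :=
  coeff_mk _ _

lemma coeff_one_lubinTateLog (p : ℕ) : coeff 1 (lubinTateLog p) = 1 := by
  rw [coeff_lubinTateLog, if_pos ⟨0, rfl⟩]
  simp

lemma coeff_lubinTateLog_self {p : ℕ} (hp : 1 < p) : coeff p (lubinTateLog p) = (p : ℚ)⁻¹ := by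
  have hlog : Nat.log p p = 1 := Nat.log_eq_one_iff'.mpr ⟨le_rfl, Nat.lt_mul_self_iff.mpr hp⟩
  rw [coeff_lubinTateLog, if_pos ⟨1, (pow_one p).symm⟩, hlog, pow_one]

lemma coeff_lubinTateLog_of_lt {p k : ℕ} (hkp : k < p) (hk : k ≠ 1) :
    coeff k (lubinTateLog p) = 0 := by
  rw [coeff_lubinTateLog, if_neg]
  rintro ⟨m, rfl⟩
  rcases Nat.eq_zero_or_pos m with rfl | hm
  · exact hk (pow_zero p)
  · exact hkp.not_ge (Nat.le_self_pow hm.ne' p)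

lemma X_pow_dvd_lubinTateLog_sub_X (p : ℕ) : X ^ p ∣ lubinTateLog p - X := by
  rw [X_pow_dvd_iff]
  intro k hk
  rcases eq_or_ne k 1 with rfl | hk1
  · simp [coeff_one_lubinTateLog]
  · simp [coeff_lubinTateLog_of_lt hk hk1, coeff_X, hk1]

/-- For `[p](X) = l⁻¹(p·l(X))` (multiplication by `p` on the Lubin–Tate formal group),
the coefficient of `X` is `p` and the coefficient of `X^p` is `1 - p^{p-1}`. -/
theorem lubinTate_mul_p_coeffs (p : ℕ) (hp : p.Prime)
    (linv : PowerSeries ℚ) (h0 : PowerSeries.constantCoeff linv = 0)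
    (hinv : psComp (lubinTateLog p) linv = PowerSeries.X) :
    PowerSeries.coeff 1 (psComp linv ((p : PowerSeries ℚ) * lubinTateLog p)) = p ∧
    PowerSeries.coeff p (psComp linv ((p : PowerSeries ℚ) * lubinTateLog p)) =
      1 - (p : ℚ) ^ (p - 1) := by
  have hp2 : 2 ≤ p := hp.two_le
  have hp0 : (p : ℚ) ≠ 0 := Nat.cast_ne_zero.mpr hp.ne_zero
  have hpL : ∀ n, coeff n ((p : ℚ⟦X⟧) * lubinTateLog p) = p * coeff n (lubinTateLog p) := by
    intro n; rw [← map_natCast C, coeff_C_mul]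
  have hlinv1 : coeff 1 linv = 1 := by
    simpa [coeff_one_psComp, coeff_one_lubinTateLog] using congrArg (coeff 1) hinv
  have hlinvX : X ^ 2 ∣ linv - C 1 * X := hlinv1 ▸ X_sq_dvd_sub_C_coeff_one_mul_X h0
  have hpLX : X ^ p ∣ (p : ℚ⟦X⟧) * lubinTateLog p - C (p : ℚ) * X := by
    rw [map_natCast, ← mul_sub]; exact dvd_mul_of_dvd_right (X_pow_dvd_lubinTateLog_sub_X p) _
  have hlinvp : coeff p linv = -(p : ℚ)⁻¹ := by
    have h := congrArg (coeff p) hinv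
    rw [coeff_psComp_of_middle_eq_zero hp2 fun k hk2 hk => by
        rw [coeff_lubinTateLog_of_lt hk (by omega), zero_mul],
      coeff_one_lubinTateLog, coeff_lubinTateLog_self hp.one_lt,
      coeff_pow_of_X_pow_dvd_sub_C_mul_X one_le_two hlinvX (by omega), if_pos rfl,
      coeff_X, if_neg hp.one_lt.ne'] at h
    linear_combination h
  refine ⟨by rw [coeff_one_psComp, hlinv1, hpL, coeff_one_lubinTateLog, one_mul, mul_one], ?_⟩
  rw [coeff_psComp_of_middle_eq_zero hp2 fun k hk hkp => by
      rw [coeff_pow_of_X_pow_dvd_sub_C_mul_X hp.one_le hpLX (by omega), if_neg hkp.ne', mul_zero],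
    coeff_pow_of_X_pow_dvd_sub_C_mul_X hp.one_le hpLX (by omega), if_pos rfl, hlinv1, hlinvp,
    hpL, coeff_lubinTateLog_self hp.one_lt, ← mul_pow_sub_one hp.ne_zero]
  field_simp
  ring
end

section
/- Let O be a discrete valuation ring with uniformizer π, p a prime with p ≥ 3, and suppose p = w·π^{ep} for some unit w ∈ O^× and integer e ≥ 1. Let A, B ∈ M_n(O) satisfy: (1) A·B ≡ π^e·I modulo p·M_n(O); and (2) A_{ir}·B_{rj} ∈ πO for all indices i, r, j. Let A^{(p)} denote the matrix with entries A_{ij}^p. Then there exists C ∈ M_n(O) such that A^{(p)}·C = p·I and moreover A_{ir}·C_{rj} ∈ πO for all i, r, j. -/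
/-!
Write `A^{(p)}` for the entrywise `p`-th power. Since every product `A i r * B r j` lies in `πO`,
the freshman's dream holds for `∑ r, A i r * B r j` modulo `p π`, and `AB ≡ πᵉ I (mod p)` gives
`(AB)_{ij}^p ≡ π^{ep} δ_{ij} (mod p²)`. As `p = w π^{ep}`, both moduli are divisible by `π^{ep+1}`,
so `A^{(p)} B^{(p)} = π^{ep} (I + π M)`. The matrix `I + π M` is invertible over the local ring `O`,
and `C = B^{(p)} (w (I + π M)⁻¹)` works.
-/

open Finset

theorem dvd_sum_pow_sub_sum_pow {R ι : Type*} [CommRing R] {p : ℕ} (hp : p.Prime) {π : R}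
    (s : Finset ι) (x : ι → R) (hx : ∀ i ∈ s, π ∣ x i) :
    (p : R) * π ∣ (∑ i ∈ s, x i) ^ p - ∑ i ∈ s, x i ^ p := by
  induction s using Finset.cons_induction with
  | empty => simp [zero_pow hp.ne_zero]
  | cons a s _ ih =>
    obtain ⟨r, hr⟩ := exists_add_pow_prime_eq hp (x a) (∑ i ∈ s, x i)
    have hcross : (p : R) * π ∣ p * x a * (∑ i ∈ s, x i) * r :=
      Dvd.dvd.mul_right ((mul_dvd_mul_left _ (hx a (mem_cons_self a s))).mul_right _) r
    have htail := ih fun i hi => hx i (mem_cons_of_mem hi)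
    rw [sum_cons, sum_cons, hr]
    convert dvd_add hcross htail using 1
    ring

namespace Matrix

variable {n R : Type*} [Fintype n] [CommRing R]

theorem dvd_mul_mul_apply {π a : R} {r j : n} {B V : Matrix n n R}
    (h : ∀ s, π ∣ a * B r s) : π ∣ a * (B * V) r j := by
  rw [mul_apply, mul_sum]
  exact dvd_sum fun s _ => mul_assoc a (B r s) (V s j) ▸ (h s).mul_right _

variable [DecidableEq n]

theorem dvd_map_pow_mul_map_pow_sub_apply {p : ℕ} (hp : p.Prime) {π c : R} (hπp : π ∣ p)
    {A B D : Matrix n n R} (hAB : A * B = c • 1 + (p : R) • D)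
    (hdiv : ∀ i r j, π ∣ A i r * B r j) (i j : n) :
    (p : R) * π ∣ (A.map (· ^ p) * B.map (· ^ p) - c ^ p • 1) i j := by
  have hfrob : (p : R) * π ∣ (A * B) i j ^ p - (A.map (· ^ p) * B.map (· ^ p)) i j := by
    simpa only [mul_apply, map_apply, mul_pow] using
      dvd_sum_pow_sub_sum_pow hp univ _ fun r _ => hdiv i r j
  have hdiag : (p : R) ^ 2 ∣ (A * B) i j ^ p - (c * (1 : Matrix n n R) i j) ^ p := by
    simpa only [pow_one] using dvd_sub_pow_of_dvd_sub (p := p) (k := 1)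
      ⟨D i j, by simp [hAB, smul_eq_mul]⟩
  have hpow : (c * (1 : Matrix n n R) i j) ^ p = c ^ p * (1 : Matrix n n R) i j := by
    rw [one_apply]
    split_ifs <;> simp [zero_pow hp.ne_zero]
  have hsq : (p : R) * π ∣ (p : R) ^ 2 := sq (p : R) ▸ mul_dvd_mul_left _ hπp
  rw [sub_apply, smul_apply, smul_eq_mul, ← hpow]
  convert dvd_sub (hsq.trans hdiag) hfrob using 1
  ring

theorem isUnit_one_add_smul [IsLocalRing R] {π : R} (hπ : π ∈ IsLocalRing.maximalIdeal R)
    (M : Matrix n n R) : IsUnit (1 + π • M) := by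
  have hres : (1 + π • M).map (IsLocalRing.residue R) = 1 := by
    have : IsLocalRing.residue R π = 0 := (IsLocalRing.residue_eq_zero_iff π).mpr hπ
    ext i j
    simp [one_apply, this, apply_ite (IsLocalRing.residue R)]
  rw [isUnit_iff_isUnit_det, ← isUnit_map_iff (IsLocalRing.residue R), RingHom.map_det,
    RingHom.mapMatrix_apply, hres, det_one]
  exact isUnit_one

end Matrix

open Matrix in
theorem frobenius_matrix_divides_p_general {O : Type*} [CommRing O] [IsDomain O]
    [IsDiscreteValuationRing O] (π : O) (hπ : Irreducible π)
    (p : ℕ) (hp : p.Prime) (e : ℕ) (he : 1 ≤ e)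
    (w : O) (hpw : (p : O) = w * π ^ (e * p))
    (n : ℕ) (A B : Matrix (Fin n) (Fin n) O)
    (h1 : ∃ D : Matrix (Fin n) (Fin n) O,
      A * B = π ^ e • (1 : Matrix (Fin n) (Fin n) O) + (p : O) • D)
    (h2 : ∀ i r j : Fin n, A i r * B r j ∈ Ideal.span ({π} : Set O)) :
    ∃ C : Matrix (Fin n) (Fin n) O,
      A.map (· ^ p) * C = (p : O) • (1 : Matrix (Fin n) (Fin n) O) ∧
      ∀ i r j : Fin n, A i r * C r j ∈ Ideal.span ({π} : Set O) := by
  obtain ⟨D, hD⟩ := h1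
  simp only [Ideal.mem_span_singleton] at h2 ⊢
  have hπp : π ∣ (p : O) := hpw ▸ (dvd_pow_self π (Nat.mul_pos he hp.pos).ne').mul_left w
  have hentries : ∀ i j, π ^ (e * p) * π ∣
      (A.map (· ^ p) * B.map (· ^ p) - (π ^ e) ^ p • 1) i j := fun i j =>
    (mul_dvd_mul_right (Dvd.intro_left w hpw.symm) π).trans
      (dvd_map_pow_mul_map_pow_sub_apply hp hπp hD h2 i j)
  choose M hM using hentries
  have hfactor : A.map (· ^ p) * B.map (· ^ p) = π ^ (e * p) • (1 + π • of M) := by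
    ext i j
    have hij := hM i j
    simp only [Matrix.sub_apply, Matrix.smul_apply, smul_eq_mul, ← pow_mul] at hij
    simp only [Matrix.smul_apply, Matrix.add_apply, smul_eq_mul, of_apply]
    linear_combination hij
  have hunit := (isUnit_iff_isUnit_det _).mp
    (isUnit_one_add_smul ((IsLocalRing.mem_maximalIdeal π).mpr hπ.not_isUnit) (of M))
  refine ⟨B.map (· ^ p) * (w • (1 + π • of M)⁻¹), ?_, fun i r j => dvd_mul_mul_apply fun s =>
    (h2 i r s).trans (mul_dvd_mul_left _ (dvd_pow_self _ hp.ne_zero))⟩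
  rw [← Matrix.mul_assoc, hfactor, smul_mul, Matrix.mul_smul, mul_nonsing_inv _ hunit,
    smul_smul, hpw, mul_comm]

/-- **Lemma 2.2.2.** Let `O` be a DVR with uniformizer `π`, `p ≥ 3` prime with
`p = w·π^{ep}` (`w` a unit, `e ≥ 1`). If `A·B ≡ πᵉ·I mod p` and `A_{ir}·B_{rj} ∈ πO`
for all indices, then there is `C` with `A^{(p)}·C = p·I` and `A_{ir}·C_{rj} ∈ πO`. -/
theorem frobenius_matrix_divides_p {O : Type*} [CommRing O] [IsDomain O]
    [IsDiscreteValuationRing O] (π : O) (hπ : Irreducible π)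
    (p : ℕ) (hp : p.Prime) (hp3 : 3 ≤ p) (e : ℕ) (he : 1 ≤ e)
    (w : O) (hw : IsUnit w) (hpw : (p : O) = w * π ^ (e * p))
    (n : ℕ) (A B : Matrix (Fin n) (Fin n) O)
    (h1 : ∃ D : Matrix (Fin n) (Fin n) O,
      A * B = π ^ e • (1 : Matrix (Fin n) (Fin n) O) + (p : O) • D)
    (h2 : ∀ i r j : Fin n, A i r * B r j ∈ Ideal.span ({π} : Set O)) :
    ∃ C : Matrix (Fin n) (Fin n) O,
      A.map (· ^ p) * C = (p : O) • (1 : Matrix (Fin n) (Fin n) O) ∧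
      ∀ i r j : Fin n, A i r * C r j ∈ Ideal.span ({π} : Set O) :=
  frobenius_matrix_divides_p_general π hπ p hp e he w hpw n A B h1 h2
end

section
/- Let O be a commutative ring, β ∈ O, W = (w_{ji}) ∈ M_u(O), and let A = O[Z_1,…,Z_u]/J where J is the ideal generated by the elements Z_i^p − β·∑_j w_{ji} Z_j for 1 ≤ i ≤ u (p a prime). Let I be the ideal of A generated by the images of Z_1,…,Z_u. If α_1,…,α_u ∈ O are such that α_1 Z_1 + ⋯ + α_u Z_u ∈ I^p + p·A, then every α_i lies in the ideal p·O + β·O. -/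
/-!
Reduce the coefficients modulo `𝔞 = pO + βO` and send `Zᵢ` to the `i`-th basis vector `εᵢ` of
the trivial square-zero extension `(O/𝔞) ⊕ (O/𝔞)ᵘ`. As `β ↦ 0` and `εᵢ ^ p = 0` for `p ≥ 2`,
this factors through `A`. The augmentation ideal lands in the square-zero ideal, so `I ^ p` is
killed, and so is `p`; but `∑ αᵢ Zᵢ` goes to the vector `(αᵢ mod 𝔞)ᵢ`, which must then vanish.
-/

/-- The ideal of relations `Z_i^p = β·∑_j w_{ji} Z_j` defining the algebra
`A = O[Z₁,…,Z_u]/J` of Lemma 2.3.5. -/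
noncomputable def relIdeal {O : Type*} [CommRing O] (p u : ℕ) (β : O)
    (W : Matrix (Fin u) (Fin u) O) : Ideal (MvPolynomial (Fin u) O) :=
  Ideal.span (Set.range fun i : Fin u =>
    MvPolynomial.X i ^ p -
      MvPolynomial.C β * ∑ j : Fin u, MvPolynomial.C (W j i) * MvPolynomial.X j)

open MvPolynomial TrivSqZeroExt

theorem TrivSqZeroExt.pow_le_ker_of_le_comap_kerIdeal {A R M : Type*} [CommRing A] [CommRing R]
    [AddCommGroup M] [Module R M] [Module Rᵐᵒᵖ M] [IsCentralScalar R M]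
    (φ : A →+* TrivSqZeroExt R M) {I : Ideal A} (hI : I ≤ (kerIdeal R M).comap φ) {n : ℕ}
    (hn : 2 ≤ n) : I ^ n ≤ RingHom.ker φ :=
  calc I ^ n ≤ ((kerIdeal R M).comap φ) ^ n := Ideal.pow_right_mono hI n
    _ ≤ (kerIdeal R M ^ n).comap φ := Ideal.le_comap_pow _ n
    _ ≤ (kerIdeal R M ^ 2).comap φ := Ideal.comap_mono (Ideal.pow_le_pow_right hn)
    _ = RingHom.ker φ := by rw [kerIdeal_sq, RingHom.ker_eq_comap_bot]

section

variable {O : Type*} [CommRing O] {p u : ℕ} {β : O} {W : Matrix (Fin u) (Fin u) O}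
  {𝔞 : Ideal O}

noncomputable def relQuotientToTrivSqZeroExt (hp : 2 ≤ p) (hβ : β ∈ 𝔞) :
    MvPolynomial (Fin u) O ⧸ relIdeal p u β W →+* TrivSqZeroExt (O ⧸ 𝔞) (Fin u → O ⧸ 𝔞) :=
  Ideal.Quotient.lift _
    (eval₂Hom ((inlHom _ _).comp (Ideal.Quotient.mk 𝔞)) fun i => inr (Pi.single i 1)) <| by
    refine fun a ha => RingHom.mem_ker.mp <| (Ideal.span_le (I := RingHom.ker _)).mpr ?_ ha
    rintro _ ⟨i, rfl⟩
    have hinr : (inr (Pi.single i 1) : TrivSqZeroExt (O ⧸ 𝔞) (Fin u → O ⧸ 𝔞)) ^ p = 0 :=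
      pow_eq_zero_of_le hp (by rw [sq, inr_mul_inr])
    simp [hinr, Ideal.Quotient.eq_zero_iff_mem.mpr hβ]

variable (hp : 2 ≤ p) (hβ : β ∈ 𝔞)

@[simp]
theorem relQuotientToTrivSqZeroExt_mk_X (i : Fin u) :
    relQuotientToTrivSqZeroExt (W := W) hp hβ (Ideal.Quotient.mk _ (X i)) =
      inr (Pi.single i 1) := by
  rw [relQuotientToTrivSqZeroExt, Ideal.Quotient.lift_mk, coe_eval₂Hom, eval₂_X]

@[simp]
theorem relQuotientToTrivSqZeroExt_mk_C (a : O) :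
    relQuotientToTrivSqZeroExt (W := W) hp hβ (Ideal.Quotient.mk _ (C a)) =
      inl (Ideal.Quotient.mk 𝔞 a) := by
  rw [relQuotientToTrivSqZeroExt, Ideal.Quotient.lift_mk, coe_eval₂Hom, eval₂_C]
  rfl

theorem relQuotientToTrivSqZeroExt_mk_C_mul_X (a : O) (i : Fin u) :
    relQuotientToTrivSqZeroExt (W := W) hp hβ (Ideal.Quotient.mk _ (C a * X i)) =
      inr (Pi.single i (Ideal.Quotient.mk 𝔞 a)) := by
  rw [map_mul, map_mul, relQuotientToTrivSqZeroExt_mk_C, relQuotientToTrivSqZeroExt_mk_X,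
    inl_mul_inr, ← Pi.single_smul', smul_eq_mul, mul_one]

theorem span_X_le_comap_kerIdeal :
    Ideal.span (Set.range fun i => Ideal.Quotient.mk (relIdeal p u β W) (X i)) ≤
      (kerIdeal _ _).comap (relQuotientToTrivSqZeroExt hp hβ) := by
  rw [Ideal.span_le]
  rintro _ ⟨i, rfl⟩
  simp [kerIdeal]

end

/-- **Lemma 2.3.5.** In `A = O[Z₁,…,Z_u]/(Z_i^p - β ∑_j w_{ji} Z_j)`, if a linear form
`∑ αᵢ Zᵢ` lies in `I^p + pA` (with `I` the augmentation ideal generated by the `Zᵢ`),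
then every `αᵢ` lies in `pO + βO`. -/
theorem linear_form_in_aug_pow {O : Type*} [CommRing O] (p : ℕ) (hp : p.Prime)
    (u : ℕ) (β : O) (W : Matrix (Fin u) (Fin u) O) (α : Fin u → O)
    (h : (∑ i : Fin u,
        Ideal.Quotient.mk (relIdeal p u β W) (MvPolynomial.C (α i) * MvPolynomial.X i)) ∈
      (Ideal.span (Set.range fun i : Fin u =>
          Ideal.Quotient.mk (relIdeal p u β W) (MvPolynomial.X i))) ^ p +
        Ideal.span ({(p : MvPolynomial (Fin u) O ⧸ relIdeal p u β W)} :
          Set (MvPolynomial (Fin u) O ⧸ relIdeal p u β W))) :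
    ∀ i : Fin u, α i ∈ Ideal.span ({(p : O), β} : Set O) := by
  intro i
  set 𝔞 := Ideal.span ({(p : O), β} : Set O)
  have hβ : β ∈ 𝔞 := Ideal.subset_span (by simp)
  have hp𝔞 : Ideal.Quotient.mk 𝔞 (p : O) = 0 :=
    Ideal.Quotient.eq_zero_iff_mem.mpr (Ideal.subset_span (by simp))
  let φ := relQuotientToTrivSqZeroExt (W := W) hp.two_le hβ
  have hp_ker : (p : MvPolynomial (Fin u) O ⧸ relIdeal p u β W) ∈ RingHom.ker φ := by
    rw [RingHom.mem_ker, map_natCast, ← inl_natCast, ← map_natCast (Ideal.Quotient.mk 𝔞), hp𝔞,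
      inl_zero]
  have hker := sup_le
    (pow_le_ker_of_le_comap_kerIdeal φ (span_X_le_comap_kerIdeal hp.two_le hβ) hp.two_le)
    ((Ideal.span_singleton_le_iff_mem _).mpr hp_ker)
  have hφ : φ (∑ j, Ideal.Quotient.mk _ (C (α j) * X j)) =
      inr fun j => Ideal.Quotient.mk 𝔞 (α j) := by
    simp only [φ, map_sum, relQuotientToTrivSqZeroExt_mk_C_mul_X, ← inr_sum,
      Finset.univ_sum_single]
  have hα : (inr fun j => Ideal.Quotient.mk 𝔞 (α j) : TrivSqZeroExt _ _) = 0 :=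
    hφ ▸ RingHom.mem_ker.mp (hker h)
  simpa [Ideal.Quotient.eq_zero_iff_mem] using congrFun (congrArg snd hα) i
end
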